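/- Let α > β ≥ 2 be coprime integers, β' the unique integer with 0 < β' < α and ββ' ≡ 1 (mod α), and α' the unique integer with 0 < α' < β and αα' ≡ 1 (mod β). Then max{S(α,β') - 3, 0} + max{S(β,α') - 3, 0} = max{S(α,β) - 3, 0} + max{S(α,β) - ⌊α/β⌋ - 3, 0}. -/
import Mathlib

/-- Sum of the partial quotients of the regular continued fraction expansion
of `p / q`, computed via the Euclidean algorithm. -/
def S (p q : ℕ) : ℕ :=
  if _h : q = 0 then 0 else p / q + S q (p % q)
termination_by q
decreasing_by exact Nat.mod_lt _ (Nat.pos_of_ne_zero _h)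

/-- Continuant matrix of a list: entries (p, p', q, q'). -/
def Mx : List ℕ → ℕ × ℕ × ℕ × ℕ
  | [] => (1, 0, 0, 1)
  | a :: l => (a * (Mx l).1 + (Mx l).2.2.1, a * (Mx l).2.1 + (Mx l).2.2.2,
      (Mx l).1, (Mx l).2.1)

lemma Mx_nil : Mx [] = (1, 0, 0, 1) := rfl
lemma Mx_cons (a : ℕ) (l : List ℕ) :
    Mx (a :: l) = (a * (Mx l).1 + (Mx l).2.2.1, a * (Mx l).2.1 + (Mx l).2.2.2,
      (Mx l).1, (Mx l).2.1) := rfl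

lemma p_pos (l : List ℕ) (h : ∀ x ∈ l, 1 ≤ x) : 1 ≤ (Mx l).1 := by
  induction l with
  | nil => simp [Mx_nil]
  | cons a l ih =>
    have ha : 1 ≤ a := h a (by simp)
    have := ih (fun x hx => h x (by simp [hx]))
    simp only [Mx_cons]
    nlinarith

lemma q_le_p (l : List ℕ) (h : ∀ x ∈ l, 1 ≤ x) : (Mx l).2.2.1 ≤ (Mx l).1 := by
  cases l with
  | nil => simp [Mx_nil]
  | cons a l =>
    have ha : 1 ≤ a := h a (by simp)
    have hp := p_pos l (fun x hx => h x (by simp [hx]))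
    simp only [Mx_cons]
    nlinarith

lemma q_zero (l : List ℕ) (h : ∀ x ∈ l, 1 ≤ x) (hq : (Mx l).2.2.1 = 0) : l = [] := by
  cases l with
  | nil => rfl
  | cons a l =>
    exfalso
    have := p_pos l (fun x hx => h x (by simp [hx]))
    simp only [Mx_cons] at hq
    omega

lemma q_eq_p (l : List ℕ) (h : ∀ x ∈ l, 1 ≤ x) (he : (Mx l).2.2.1 = (Mx l).1) :
    l = [1] := by
  cases l with
  | nil => simp [Mx_nil] at he
  | cons a l =>
    have ha : 1 ≤ a := h a (by simp)
    have h' : ∀ x ∈ l, 1 ≤ x := fun x hx => h x (by simp [hx])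
    have hp := p_pos l h'
    simp only [Mx_cons] at he
    have ha1 : a = 1 := by nlinarith
    have hq0 : (Mx l).2.2.1 = 0 := by nlinarith
    rw [q_zero l h' hq0, ha1]

lemma S_zero (p : ℕ) : S p 0 = 0 := by rw [S]; simp

lemma S_one (p : ℕ) : S p 1 = p := by
  rw [S]
  simp [Nat.mod_one, Nat.div_one, S_zero]

/-- Key: S applied to the (p,q) of a list of positive entries gives the sum. -/
lemma S_Mx (l : List ℕ) (h : ∀ x ∈ l, 1 ≤ x) :
    S (Mx l).1 (Mx l).2.2.1 = l.sum := by
  match l with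
  | [] => simp [Mx_nil, S_zero]
  | [a] => simp [Mx_cons, Mx_nil, S_one]
  | a :: b :: l =>
    have ha : 1 ≤ a := h a (by simp)
    have h' : ∀ x ∈ b :: l, 1 ≤ x := fun x hx => h x (by simp [hx])
    have hp := p_pos _ h'
    have hqp := q_le_p _ h'
    rcases lt_or_eq_of_le hqp with hlt | heq
    · have ih := S_Mx (b :: l) h'
      rw [Mx_cons, S]
      simp only
      rw [dif_neg (by omega)]
      rw [mul_comm, Nat.mul_add_div (by omega), Nat.div_eq_of_lt hlt,
        Nat.mul_add_mod, Nat.mod_eq_of_lt hlt, ih]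
      simp [List.sum_cons]
    · have hbl : b :: l = [1] := q_eq_p _ h' heq
      rw [hbl]
      have hMx : Mx (a :: [1]) = (a + 1, a, 1, 1) := by
        simp [Mx_cons, Mx_nil]
      rw [hMx]
      rw [hbl] at *
      simp [S_one]
  termination_by l.length

/-- The complement identity: if the head is ≥ 2 then S p (p - q) is also the sum. -/
lemma S_Mx_compl (x : ℕ) (l : List ℕ) (hx : 2 ≤ x) (h : ∀ y ∈ l, 1 ≤ y) :
    S (Mx (x :: l)).1 ((Mx (x :: l)).1 - (Mx (x :: l)).2.2.1) = (x :: l).sum := by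
  have hp := p_pos l h
  have hq := q_le_p l h
  have hP : (Mx (x :: l)).1 = x * (Mx l).1 + (Mx l).2.2.1 := by rw [Mx_cons]
  have hQ : (Mx (x :: l)).2.2.1 = (Mx l).1 := by rw [Mx_cons]
  have hxp : x * (Mx l).1 = (Mx l).1 + (x - 1) * (Mx l).1 := by
    cases x with
    | zero => omega
    | succ n => simp [Nat.succ_sub_one]; ring
  have hle : (Mx l).1 ≤ (x - 1) * (Mx l).1 :=
    Nat.le_mul_of_pos_left _ (by omega)
  rw [hP, hQ]
  have hsub : x * (Mx l).1 + (Mx l).2.2.1 - (Mx l).1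
      = (x - 1) * (Mx l).1 + (Mx l).2.2.1 := by omega
  rw [hsub]
  have hge : (Mx l).1 ≤ (x - 1) * (Mx l).1 + (Mx l).2.2.1 := by omega
  rcases lt_or_eq_of_le hge with hlt' | heq'
  · rw [S, dif_neg (by omega)]
    have hnum : x * (Mx l).1 + (Mx l).2.2.1
        = ((x - 1) * (Mx l).1 + (Mx l).2.2.1) + (Mx l).1 := by omega
    have hdiv : (x * (Mx l).1 + (Mx l).2.2.1) / ((x - 1) * (Mx l).1 + (Mx l).2.2.1) = 1 := by
      rw [hnum, Nat.add_div_left _ (by omega), Nat.div_eq_of_lt hlt']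
    have hmod : (x * (Mx l).1 + (Mx l).2.2.1) % ((x - 1) * (Mx l).1 + (Mx l).2.2.1)
        = (Mx l).1 := by
      rw [hnum, Nat.add_mod_left, Nat.mod_eq_of_lt hlt']
    rw [hdiv, hmod]
    have hsum := S_Mx ((x - 1) :: l) (by
      intro y hy
      rcases List.mem_cons.mp hy with h1 | h2
      · omega
      · exact h y h2)
    rw [Mx_cons] at hsum
    simp only at hsum
    rw [hsum]
    simp [List.sum_cons]
    omega
  · have hq0 : (Mx l).2.2.1 = 0 := by omega
    have hx1 : (x - 1) * (Mx l).1 = (Mx l).1 := by omega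
    have hx2 : x = 2 := by
      have := Nat.eq_of_mul_eq_mul_right (by omega : 0 < (Mx l).1)
        (by rw [hx1, one_mul] : (x - 1) * (Mx l).1 = 1 * (Mx l).1)
      omega
    have hl : l = [] := q_zero l h hq0
    subst hl; subst hx2
    simp only [Mx_nil]
    norm_num [S_one]

/-- snoc formula. -/
lemma Mx_snoc (l : List ℕ) (a : ℕ) :
    Mx (l ++ [a]) = ((Mx l).1 * a + (Mx l).2.1, (Mx l).1,
      (Mx l).2.2.1 * a + (Mx l).2.2.2, (Mx l).2.2.1) := by
  induction l with
  | nil => simp [Mx_cons, Mx_nil]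
  | cons b l ih =>
    simp only [List.cons_append, Mx_cons, ih]
    refine Prod.ext ?_ (Prod.ext ?_ (Prod.ext ?_ ?_)) <;> simp <;> ring

/-- Reversal transposes the continuant matrix. -/
lemma Mx_reverse (l : List ℕ) :
    Mx l.reverse = ((Mx l).1, (Mx l).2.2.1, (Mx l).2.1, (Mx l).2.2.2) := by
  induction l with
  | nil => simp [Mx_nil]
  | cons a l ih =>
    rw [List.reverse_cons, Mx_snoc, ih, Mx_cons]
    refine Prod.ext ?_ (Prod.ext ?_ (Prod.ext ?_ ?_)) <;> simp <;> ring

/-- Determinant identity. -/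
lemma Mx_det (l : List ℕ) :
    ((Mx l).1 : ℤ) * (Mx l).2.2.2 - (Mx l).2.1 * (Mx l).2.2.1 = (-1) ^ l.length := by
  induction l with
  | nil => simp [Mx_nil]
  | cons a l ih =>
    rw [Mx_cons]
    push_cast
    simp only [List.length_cons, pow_succ]
    nlinarith [ih]

/-- Euclid's continued fraction list. -/
def cf (a b : ℕ) : List ℕ :=
  if _h : b = 0 then [] else a / b :: cf b (a % b)
termination_by b
decreasing_by exact Nat.mod_lt _ (Nat.pos_of_ne_zero _h)

lemma S_eq_sum_cf (a b : ℕ) : S a b = (cf a b).sum := by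
  rcases Nat.eq_zero_or_pos b with rfl | hb
  · rw [S, cf]; simp
  · rw [S, cf, dif_neg (by omega), dif_neg (by omega), List.sum_cons,
      S_eq_sum_cf b (a % b)]
termination_by b
decreasing_by exact Nat.mod_lt _ hb

lemma cf_mem (a b : ℕ) (hb : 0 < b) (hba : b ≤ a) : ∀ x ∈ cf a b, 1 ≤ x := by
  intro x hx
  rw [cf, dif_neg (by omega)] at hx
  rcases List.mem_cons.mp hx with h1 | h2
  · subst h1
    exact (Nat.one_le_div_iff hb).mpr hba
  · rcases Nat.eq_zero_or_pos (a % b) with h0 | hpos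
    · rw [cf, dif_pos h0] at h2
      simp at h2
    · exact cf_mem b (a % b) hpos (le_of_lt (Nat.mod_lt _ hb)) x h2
termination_by b
decreasing_by exact Nat.mod_lt _ hb

lemma cop_mod {a b : ℕ} (hg : Nat.Coprime a b) : Nat.Coprime b (a % b) := by
  unfold Nat.Coprime at *
  rw [Nat.gcd_comm, ← Nat.gcd_rec]
  rwa [Nat.gcd_comm]

lemma mod_ne_zero {a b : ℕ} (hb : 2 ≤ b) (hg : Nat.Coprime a b) : a % b ≠ 0 := by
  intro h0
  have hdvd : b ∣ a := Nat.dvd_of_mod_eq_zero h0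
  have : b ∣ Nat.gcd a b := Nat.dvd_gcd hdvd dvd_rfl
  rw [hg] at this
  exact absurd (Nat.le_of_dvd one_pos this) (by omega)

lemma cf_pq (a b : ℕ) (hb : 0 < b) (hba : b ≤ a) (hg : Nat.Coprime a b) :
    (Mx (cf a b)).1 = a ∧ (Mx (cf a b)).2.2.1 = b := by
  rw [cf, dif_neg (by omega)]
  rcases Nat.eq_zero_or_pos (a % b) with h0 | hpos
  · have hb1 : b = 1 := by
      have hdvd : b ∣ a := Nat.dvd_of_mod_eq_zero h0
      have : b ∣ Nat.gcd a b := Nat.dvd_gcd hdvd dvd_rfl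
      rw [hg] at this
      exact Nat.dvd_one.mp this
    subst hb1
    rw [Nat.mod_one, cf, dif_pos rfl, Mx_cons, Mx_nil]
    simp
  · have hg' : Nat.Coprime b (a % b) := cop_mod hg
    have ih := cf_pq b (a % b) hpos (le_of_lt (Nat.mod_lt _ hb)) hg'
    rw [Mx_cons, ih.1, ih.2]
    refine ⟨?_, rfl⟩
    simp only
    exact Nat.div_add_mod' a b
termination_by b
decreasing_by exact Nat.mod_lt _ hb

lemma cf_last (a b : ℕ) (hb : 2 ≤ b) (hba : b < a) (hg : Nat.Coprime a b) :
    ∃ y l, cf a b = l ++ [y] ∧ 2 ≤ y := by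
  have h0 : a % b ≠ 0 := mod_ne_zero hb hg
  rw [cf, dif_neg (by omega)]
  rcases eq_or_lt_of_le (Nat.one_le_iff_ne_zero.mpr h0) with h1 | h2
  · refine ⟨b, [a / b], ?_, hb⟩
    rw [← h1, cf, dif_neg (by omega), Nat.mod_one, cf, dif_pos rfl]
    simp
  · obtain ⟨y, l, hl, hy⟩ := cf_last b (a % b) h2 (Nat.mod_lt _ (by omega)) (cop_mod hg)
    exact ⟨y, a / b :: l, by rw [hl]; rfl, hy⟩
termination_by b
decreasing_by exact Nat.mod_lt _ (by omega)

/-- Main inversion lemma. -/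
lemma S_inv (a b b' : ℕ) (hb : 2 ≤ b) (hba : b < a) (hg : Nat.Coprime a b)
    (hb'0 : 0 < b') (hb'a : b' < a) (hmod : b * b' ≡ 1 [MOD a]) : S a b' = S a b := by
  obtain ⟨hcp, hcq⟩ := cf_pq a b (by omega) (le_of_lt hba) hg
  have hmem : ∀ x ∈ cf a b, 1 ≤ x := cf_mem a b (by omega) (le_of_lt hba)
  obtain ⟨y, l0, hl0, hy⟩ := cf_last a b hb hba hg
  have hrevl : (cf a b).reverse = y :: l0.reverse := by
    rw [hl0, List.reverse_append]; simp
  have hmemrev : ∀ x ∈ (cf a b).reverse, 1 ≤ x := by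
    intro x hx; exact hmem x (List.mem_reverse.mp hx)
  have hmemrest : ∀ x ∈ l0.reverse, 1 ≤ x := by
    intro x hx; exact hmemrev x (by rw [hrevl]; simp [hx])
  have hrev := Mx_reverse (cf a b)
  -- components of reversed matrix
  have e1 : (Mx ((cf a b).reverse)).1 = a := by rw [hrev]; exact hcp
  have e2 : (Mx ((cf a b).reverse)).2.2.1 = (Mx (cf a b)).2.1 := by rw [hrev]
  -- bounds on p' := (Mx (cf a b)).2.1
  have hPrest := p_pos l0.reverse hmemrest
  have hQrest := q_le_p l0.reverse hmemrest
  have hcomp1 : (Mx ((cf a b)).reverse).1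
      = y * (Mx l0.reverse).1 + (Mx l0.reverse).2.2.1 := by rw [hrevl, Mx_cons]
  have hcomp2 : (Mx ((cf a b)).reverse).2.2.1 = (Mx l0.reverse).1 := by
    rw [hrevl, Mx_cons]
  have hp'val : (Mx (cf a b)).2.1 = (Mx l0.reverse).1 := by rw [← e2, hcomp2]
  have hp'pos : 1 ≤ (Mx (cf a b)).2.1 := by rw [hp'val]; exact hPrest
  have hp'lt : (Mx (cf a b)).2.1 < a := by
    rw [hp'val]
    have : a = y * (Mx l0.reverse).1 + (Mx l0.reverse).2.2.1 := by
      rw [← e1, hcomp1]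
    nlinarith
  -- determinant
  have hdet := Mx_det (cf a b)
  rw [hcp, hcq] at hdet
  -- ℤ mod arithmetic
  have hmodZ : ((b : ℤ) * b') ≡ 1 [ZMOD (a : ℕ)] := by
    have := Int.natCast_modEq_iff.mpr hmod
    push_cast at this ⊢
    exact this
  set p' : ℕ := (Mx (cf a b)).2.1 with hp'def
  set q' : ℕ := (Mx (cf a b)).2.2.2 with hq'def
  -- sum facts
  have hsum_rev : S a p' = (cf a b).sum := by
    have := S_Mx ((cf a b).reverse) hmemrev
    rw [e1, e2, List.sum_reverse] at this
    exact this
  have hsum_compl : S a (a - p') = (cf a b).sum := by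
    have := S_Mx_compl y l0.reverse hy hmemrest
    rw [← hrevl, e1] at this
    have e2' : (Mx ((cf a b).reverse)).2.2.1 = p' := e2
    rw [hrevl] at e2' this
    rw [e2'] at this
    rw [← List.sum_reverse (cf a b), hrevl]
    exact this
  have hSab : S a b = (cf a b).sum := by
    rw [S_eq_sum_cf]
  rcases Nat.even_or_odd (cf a b).length with hev | hod
  · -- (-1)^len = 1 : a q' - p' b = 1, so b' = a - p'
    have hdet1 : (a : ℤ) * q' - p' * b = 1 := by
      rw [hdet, Even.neg_one_pow hev]
    have h1 : (b : ℤ) * (a - p') ≡ 1 [ZMOD (a : ℕ)] :=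
      (Int.modEq_iff_dvd.mpr ⟨(b : ℤ) - q', by push_cast; linear_combination hdet1⟩).symm
    have hz : (b' : ℤ) ≡ (a : ℤ) - p' [ZMOD (a : ℕ)] := by
      calc (b' : ℤ) = b' * 1 := by ring
        _ ≡ b' * ((b : ℤ) * (a - p')) [ZMOD (a : ℕ)] := (Int.ModEq.mul_left _ h1.symm)
        _ = ((b : ℤ) * b') * ((a : ℤ) - p') := by ring
        _ ≡ 1 * ((a : ℤ) - p') [ZMOD (a : ℕ)] := Int.ModEq.mul_right _ hmodZ
        _ = (a : ℤ) - p' := by ring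
    have hb'eq : b' = a - p' := by
      have h3 : (b' : ℤ) % a = ((a : ℤ) - p') % a := hz
      rw [Int.emod_eq_of_lt (by positivity) (by exact_mod_cast hb'a),
        Int.emod_eq_of_lt (by push_cast; omega) (by push_cast; omega)] at h3
      omega
    rw [hb'eq, hsum_compl, hSab]
  · have hdet1 : (a : ℤ) * q' - p' * b = -1 := by
      rw [hdet, Odd.neg_one_pow hod]
    have h1 : (b : ℤ) * p' ≡ 1 [ZMOD (a : ℕ)] :=
      (Int.modEq_iff_dvd.mpr ⟨(q' : ℤ), by push_cast; linear_combination -hdet1⟩).symm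
    have hz : (b' : ℤ) ≡ (p' : ℤ) [ZMOD (a : ℕ)] := by
      calc (b' : ℤ) = b' * 1 := by ring
        _ ≡ b' * ((b : ℤ) * p') [ZMOD (a : ℕ)] := (Int.ModEq.mul_left _ h1.symm)
        _ = ((b : ℤ) * b') * (p' : ℤ) := by ring
        _ ≡ 1 * (p' : ℤ) [ZMOD (a : ℕ)] := Int.ModEq.mul_right _ hmodZ
        _ = (p' : ℤ) := by ring
    have hb'eq : b' = p' := by
      have h3 : (b' : ℤ) % a = (p' : ℤ) % a := hz
      rw [Int.emod_eq_of_lt (by positivity) (by exact_mod_cast hb'a),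
        Int.emod_eq_of_lt (by positivity) (by exact_mod_cast hp'lt)] at h3
      omega
    rw [hb'eq, hsum_rev, hSab]

theorem stmt_19 (α β β' α' : ℕ) (hβ : 2 ≤ β) (hβα : β < α) (hcop : Nat.Coprime α β)
    (hβ'0 : 0 < β') (hβ'α : β' < α) (hβ' : β * β' ≡ 1 [MOD α])
    (hα'0 : 0 < α') (hα'β : α' < β) (hα' : α * α' ≡ 1 [MOD β]) :
    max (S α β' - 3) 0 + max (S β α' - 3) 0 =
      max (S α β - 3) 0 + max (S α β - α / β - 3) 0 := by
  have h1 : S α β' = S α β := S_inv α β β' hβ hβα hcop hβ'0 hβ'α hβ'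
  have h3 : S α β = α / β + S β (α % β) := by rw [S, dif_neg (by omega)]
  have hm0 : α % β ≠ 0 := mod_ne_zero hβ hcop
  have hmod2 : (α % β) * α' ≡ 1 [MOD β] :=
    ((Nat.mod_modEq α β).mul_right α').trans hα'
  have h2 : S β α' = S β (α % β) := by
    rcases eq_or_lt_of_le (Nat.one_le_iff_ne_zero.mpr hm0) with he | h2m
    · have hα'1 : α' = 1 := by
        rw [← he, one_mul] at hmod2
        have h4 : α' % β = 1 % β := hmod2
        rw [Nat.mod_eq_of_lt hα'β, Nat.mod_eq_of_lt (by omega)] at h4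
        exact h4
      rw [hα'1, ← he]
    · exact S_inv β (α % β) α' h2m (Nat.mod_lt _ (by omega)) (cop_mod hcop)
        hα'0 hα'β hmod2
  simp only [Nat.max_zero]
  omega
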